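/- Let a, k be bounded operators on H with ak = ka and a*k = ka*, satisfying q²a*a − aa* = (q²−1)·1 and q²k k* − k*k = (q²−1)·1 (so k* satisfies the disk relation), with 0 < q < 1. Let ξ, ζ ∈ ker(a) ∩ ker(k*) be orthogonal. Then for all n₁, m₁, n₂, m₂ ∈ ℕ, ⟨(a*)^{n₁} k^{m₁} ξ, (a*)^{n₂} k^{m₂} ζ⟩ = 0. -/

import Mathlib

/-! The relation `c T†T - T T† = (c - 1)` lets `T` pass through `T†^(m+1)` at the cost of the
scalar `1 - c^(m+1)` and a term ending in `T`. Hence for `x, y ∈ ker T` every inner product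
`⟪T†^n x, T†^m y⟫` reduces, moving one `T†` across at a time, to `⟪x, y⟫` or to one containing
`T x = 0`. For `T = k†` this makes `k^m₁ ξ ⊥ k^m₂ ζ`; these vectors stay in `ker a` because `k`
commutes with `a`, and the case `T = a` finishes the proof. -/

open ContinuousLinearMap

theorem mul_pow_succ_eq_of_smul_mul_sub_mul_eq {R A : Type*} [CommRing R] [Ring A] [Algebra R A]
    {T S : A} {c : R} (h : c • (S * T) - T * S = (c - 1) • 1) (m : ℕ) :
    T * S ^ (m + 1) = c ^ (m + 1) • (S ^ (m + 1) * T) + (1 - c ^ (m + 1)) • S ^ m := by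
  have hTS : T * S = c • (S * T) + (1 - c) • 1 := by
    rw [← neg_sub c 1, neg_smul, ← h]; abel
  induction m with
  | zero => simpa using hTS
  | succ m ih =>
    calc T * S ^ (m + 2) = (T * S ^ (m + 1)) * S := by rw [pow_succ _ (m + 1), mul_assoc]
      _ = c ^ (m + 1) • (S ^ (m + 1) * (T * S)) + (1 - c ^ (m + 1)) • S ^ (m + 1) := by
        rw [ih, add_mul, smul_mul_assoc, smul_mul_assoc, mul_assoc, ← pow_succ]
      _ = _ := by
        rw [hTS, mul_add, mul_smul_comm, mul_smul_comm, ← mul_assoc, ← pow_succ, mul_one]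
        module

theorem inner_adjoint_pow_apply_eq_zero {𝕜 E : Type*} [RCLike 𝕜] [NormedAddCommGroup E]
    [InnerProductSpace 𝕜 E] [CompleteSpace E] {T : E →L[𝕜] E} {c : 𝕜}
    (hT : c • (adjoint T * T) - T * adjoint T = (c - 1) • 1) {x y : E}
    (hx : T x = 0) (hy : T y = 0) (hxy : inner 𝕜 x y = 0) (n m : ℕ) :
    inner 𝕜 ((adjoint T ^ n) x) ((adjoint T ^ m) y) = 0 := by
  induction n generalizing m with
  | zero =>
    cases m with
    | zero => simpa using hxy
    | succ m =>
      rw [pow_zero, one_apply_eq_self, pow_succ', mul_apply_eq_comp, ← adjoint_inner_left,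
        adjoint_adjoint, hx, inner_zero_left]
  | succ n ih =>
    rw [pow_succ', mul_apply_eq_comp, adjoint_inner_left]
    cases m with
    | zero => simp [hy]
    | succ m =>
      rw [← mul_apply_eq_comp, mul_pow_succ_eq_of_smul_mul_sub_mul_eq hT, add_apply, smul_apply,
        mul_apply_eq_comp, hy, map_zero, smul_zero, zero_add, smul_apply, inner_smul_right, ih,
        mul_zero]

theorem stmt18_general {H : Type*} [NormedAddCommGroup H] [InnerProductSpace ℂ H] [CompleteSpace H]
    (q : ℝ) (a k : H →L[ℂ] H)
    (hak : a * k = k * a)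
    (hdiska : ((q : ℂ) ^ 2) • (adjoint a * a) - a * adjoint a
      = ((q : ℂ) ^ 2 - 1) • (1 : H →L[ℂ] H))
    (hdiskk : ((q : ℂ) ^ 2) • (k * adjoint k) - adjoint k * k
      = ((q : ℂ) ^ 2 - 1) • (1 : H →L[ℂ] H))
    (ξ ζ : H) (hξa : a ξ = 0) (hξk : adjoint k ξ = 0)
    (hζa : a ζ = 0) (hζk : adjoint k ζ = 0)
    (horth : (inner ℂ ξ ζ : ℂ) = 0) :
    ∀ n₁ m₁ n₂ m₂ : ℕ,
      (inner ℂ (((adjoint a) ^ n₁) ((k ^ m₁) ξ)) (((adjoint a) ^ n₂) ((k ^ m₂) ζ)) : ℂ) = 0 := by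
  intro n₁ m₁ n₂ m₂
  have hdisk_adjoint_k : ((q : ℂ) ^ 2) • (adjoint (adjoint k) * adjoint k)
      - adjoint k * adjoint (adjoint k) = ((q : ℂ) ^ 2 - 1) • (1 : H →L[ℂ] H) := by
    rwa [adjoint_adjoint]
  have horth_k : inner ℂ ((k ^ m₁) ξ) ((k ^ m₂) ζ) = 0 := by
    simpa only [adjoint_adjoint] using
      inner_adjoint_pow_apply_eq_zero hdisk_adjoint_k hξk hζk horth m₁ m₂
  have ha_k_pow : ∀ (m : ℕ) {v : H}, a v = 0 → a ((k ^ m) v) = 0 := fun m v hv => by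
    rw [← mul_apply_eq_comp, (Commute.pow_right hak m).eq, mul_apply_eq_comp, hv, map_zero]
  exact inner_adjoint_pow_apply_eq_zero hdiska (ha_k_pow m₁ hξa) (ha_k_pow m₂ hζa) horth_k n₁ n₂

theorem stmt18 {H : Type*} [NormedAddCommGroup H] [InnerProductSpace ℂ H] [CompleteSpace H]
    (q : ℝ) (hq0 : 0 < q) (hq1 : q < 1) (a k : H →L[ℂ] H)
    (hak : a * k = k * a) (hak' : adjoint a * k = k * adjoint a)
    (hdiska : ((q : ℂ) ^ 2) • (adjoint a * a) - a * adjoint a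
      = ((q : ℂ) ^ 2 - 1) • (1 : H →L[ℂ] H))
    (hdiskk : ((q : ℂ) ^ 2) • (k * adjoint k) - adjoint k * k
      = ((q : ℂ) ^ 2 - 1) • (1 : H →L[ℂ] H))
    (ξ ζ : H) (hξa : a ξ = 0) (hξk : adjoint k ξ = 0)
    (hζa : a ζ = 0) (hζk : adjoint k ζ = 0)
    (horth : (inner ℂ ξ ζ : ℂ) = 0) :
    ∀ n₁ m₁ n₂ m₂ : ℕ,
      (inner ℂ (((adjoint a) ^ n₁) ((k ^ m₁) ξ)) (((adjoint a) ^ n₂) ((k ^ m₂) ζ)) : ℂ) = 0 :=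
  stmt18_general q a k hak hdiska hdiskk ξ ζ hξa hξk hζa hζk horth
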